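/- In the Norton–Simon model with mutations and a resistance cost, where the resistant growth rate is φ_R(S,R) = ρ_r g(N) R + τ₁ ρ_s g(N) S − τ₂ ρ_r g(N) R with N = S + R, g > 0 decreasing, ρ_s, ρ_r > 0: ∂φ_R/∂S ≤ 0 if and only if (x_r/τ₁)(ρ_r/ρ_s − τ₂ ρ_r/ρ_s − τ₁) + 1 ≥ −g(N)/(N g'(N)), where x_r = R/N. In particular, for the power-law model g(N) = ρ N^{−γ}, substituting x_r = τ₁/(1 − ρ_r/ρ_s) and neglecting terms of order τ₁, τ₂, the condition becomes 1/(1 − ρ_r/ρ_s) ≥ 1/γ, i.e. ρ_r/ρ_s ≥ 1 − γ. -/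

import Mathlib

section NortonSimon

variable {g : ℝ → ℝ} {g' τ₁ τ₂ ρs ρr S R : ℝ}

theorem hasDerivAt_resistantGrowth (hg : HasDerivAt g g' (S + R)) :
    HasDerivAt (fun s => ρr * (g (s + R) * R) + τ₁ * (ρs * (g (s + R) * s)) -
        τ₂ * (ρr * (g (s + R) * R)))
      (((1 - τ₂) * ρr * R + τ₁ * ρs * S) * g' + τ₁ * ρs * g (S + R)) S := by
  have hcomp : HasDerivAt (fun s => g (s + R)) g' S := hg.comp_add_const S R
  refine (((hcomp.mul_const R).const_mul ρr).add
      (((hcomp.mul (hasDerivAt_id' S)).const_mul ρs).const_mul τ₁) |>.sub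
      (((hcomp.mul_const R).const_mul ρr).const_mul τ₂)).congr_deriv ?_
  ring

/-- The paper's condition, cleared of denominators, is the derivative of `φ_R` in `S`
rescaled by `τ₁ ρ_s`. -/
theorem resistanceCondition_mul_add_eq (hτ₁ : τ₁ ≠ 0) (hρs : ρs ≠ 0) (hN : S + R ≠ 0) :
    ((R / (S + R)) / τ₁ * (ρr / ρs - τ₂ * (ρr / ρs) - τ₁) + 1) * ((S + R) * g') + g (S + R) =
      (((1 - τ₂) * ρr * R + τ₁ * ρs * S) * g' + τ₁ * ρs * g (S + R)) / (τ₁ * ρs) := by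
  field_simp
  ring

end NortonSimon

theorem one_div_one_sub_ge_one_div_iff {x γ : ℝ} (hγ : 0 < γ) (hx : x < 1) :
    1 / (1 - x) ≥ 1 / γ ↔ x ≥ 1 - γ := by
  rw [ge_iff_le, ge_iff_le, one_div_le_one_div hγ (sub_pos.mpr hx)]
  exact sub_le_comm

theorem resistance_cost_condition_general
    (g : ℝ → ℝ) (τ₁ τ₂ ρs ρr S R : ℝ)
    (hτ₁ : 0 < τ₁) (hρs : 0 < ρs)
    (hS : 0 < S) (hR : 0 < R)
    (hg : DifferentiableAt ℝ g (S + R))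
    (hg' : deriv g (S + R) < 0) :
    (deriv (fun s => ρr * (g (s + R) * R) + τ₁ * (ρs * (g (s + R) * s)) -
        τ₂ * (ρr * (g (s + R) * R))) S ≤ 0 ↔
      (R / (S + R)) / τ₁ * (ρr / ρs - τ₂ * (ρr / ρs) - τ₁) + 1 ≥
        -g (S + R) / ((S + R) * deriv g (S + R))) ∧
    (∀ γ : ℝ, 0 < γ → γ < 1 → ρr / ρs < 1 →
      (1 / (1 - ρr / ρs) ≥ 1 / γ ↔ ρr / ρs ≥ 1 - γ)) := by
  refine ⟨?_, fun γ hγ _ hρ => one_div_one_sub_ge_one_div_iff hγ hρ⟩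
  have hN : 0 < S + R := add_pos hS hR
  have hscale : 0 < τ₁ * ρs := mul_pos hτ₁ hρs
  rw [(hasDerivAt_resistantGrowth hg.hasDerivAt).deriv, ge_iff_le,
    div_le_iff_of_neg (mul_neg_of_pos_of_neg hN hg'), le_neg_iff_add_nonpos_right,
    resistanceCondition_mul_add_eq hτ₁.ne' hρs.ne' hN.ne', div_le_iff₀ hscale, zero_mul]

/-- Norton–Simon model with mutations and a resistance cost: with
`φ_R(S,R) = ρ_r g(N) R + τ₁ ρ_s g(N) S − τ₂ ρ_r g(N) R`, `N = S + R`,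
one has `∂φ_R/∂S ≤ 0` iff
`(x_r/τ₁)(ρ_r/ρ_s − τ₂ ρ_r/ρ_s − τ₁) + 1 ≥ −g(N)/(N g'(N))` with
`x_r = R/N`. In particular, for the power-law model `g(N) = ρ N^(−γ)`,
substituting `x_r = τ₁/(1 − ρ_r/ρ_s)` (and neglecting terms of order
`τ₁, τ₂`), the condition `1/(1 − ρ_r/ρ_s) ≥ 1/γ` is equivalent to
`ρ_r/ρ_s ≥ 1 − γ`. -/
theorem resistance_cost_condition
    (g : ℝ → ℝ) (τ₁ τ₂ ρs ρr S R : ℝ)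
    (hτ₁ : 0 < τ₁) (hτ₂ : 0 < τ₂) (hρs : 0 < ρs) (hρr : 0 < ρr)
    (hS : 0 < S) (hR : 0 < R)
    (hg : DifferentiableAt ℝ g (S + R))
    (hgpos : 0 < g (S + R)) (hg' : deriv g (S + R) < 0) :
    (deriv (fun s => ρr * (g (s + R) * R) + τ₁ * (ρs * (g (s + R) * s)) -
        τ₂ * (ρr * (g (s + R) * R))) S ≤ 0 ↔
      (R / (S + R)) / τ₁ * (ρr / ρs - τ₂ * (ρr / ρs) - τ₁) + 1 ≥
        -g (S + R) / ((S + R) * deriv g (S + R))) ∧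
    (∀ γ : ℝ, 0 < γ → γ < 1 → ρr / ρs < 1 →
      (1 / (1 - ρr / ρs) ≥ 1 / γ ↔ ρr / ρs ≥ 1 - γ)) :=
  resistance_cost_condition_general g τ₁ τ₂ ρs ρr S R hτ₁ hρs hS hR hg hg'
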